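/- arXiv:1807.04936 — 3 statements merged into one kernel-verified Lean document; each statement's English description precedes it below -/
import Mathlib

section
/- Let Y be a real random variable with mean 0 and variance 1, Z an independent standard Gaussian, and W_t = √(1-t²)Y + tZ. Suppose k ≥ 3 is the smallest index with |M_k(Y) - M_k(Z)| ≥ D. Then |M_k(W_t) - M_k(Z)| ≥ D((1-t²)^{k/2} - t(1-t²)^{3/2}(1+√(k-3))^k), and in particular for k = 3, |M_3(W_t) - M_3(Z)| ≥ D(1-t²)^{3/2}. -/
/-!
Write `s = √(1 - t²)` and `m_j` for the moments of the standard Gaussian. Expanding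
`(s Y + t Z)^k` binomially and using independence gives `Σ_j C(k,j) s^j t^(k-j) M_j(Y) m_(k-j)`;
the same expansion applied to two independent standard Gaussians, whose combination `s Z₁ + t Z₂`
is again standard Gaussian because `s² + t² = 1`, gives `m_k`. So `M_k(W_t) - m_k` is the sum of
`C(k,j) s^j t^(k-j) (M_j(Y) - m_j) m_(k-j)`, whose terms `j ≤ 2` vanish. The term `j = k` has
size at least `D s^k`, and each term `3 ≤ j < k` is at most `D t s³ C(k,j) √(k-3)^(k-j)`, because
Gaussian integration by parts gives `m_(j+2) = (j+1) m_j`, hence `0 ≤ m_j ≤ √c^j` for `j ≤ c`.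
Summing the binomial coefficients bounds the error by `D t s³ (1 + √(k-3))^k`.
-/

open MeasureTheory ProbabilityTheory Real Finset
open scoped NNReal

lemma integrable_pow_mul_exp_neg_mul_sq {b : ℝ} (hb : 0 < b) (j : ℕ) :
    Integrable fun x : ℝ => x ^ j * exp (-b * x ^ 2) := by
  simpa [Real.rpow_natCast] using
    integrable_rpow_mul_exp_neg_mul_sq hb (s := j) (neg_one_lt_zero.trans_le j.cast_nonneg)

lemma integral_pow_add_two_mul_exp_neg_mul_sq {b : ℝ} (hb : 0 < b) (j : ℕ) :
    ∫ x : ℝ, x ^ (j + 2) * exp (-b * x ^ 2)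
      = (j + 1) / (2 * b) * ∫ x : ℝ, x ^ j * exp (-b * x ^ 2) := by
  have hderiv (x : ℝ) : HasDerivAt (fun x => x ^ (j + 1) * exp (-b * x ^ 2))
      ((j + 1) * (x ^ j * exp (-b * x ^ 2)) - 2 * b * (x ^ (j + 2) * exp (-b * x ^ 2))) x := by
    have := ((hasDerivAt_pow (j + 1) x).mul
      (((hasDerivAt_pow 2 x).const_mul (-b)).exp))
    refine this.congr_deriv ?_
    simp only [Nat.add_sub_cancel, Nat.cast_add, Nat.cast_one, Nat.cast_ofNat]
    ring
  have hint := integrable_pow_mul_exp_neg_mul_sq hb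
  have := integral_eq_zero_of_hasDerivAt_of_integrable hderiv
    (((hint j).const_mul _).sub ((hint (j + 2)).const_mul _)) (hint (j + 1))
  rw [integral_sub ((hint j).const_mul _) ((hint (j + 2)).const_mul _), integral_const_mul,
    integral_const_mul, sub_eq_zero] at this
  rw [div_mul_eq_mul_div, eq_div_iff (by positivity)]
  linarith

lemma integral_gaussianReal_eq_integral_mul_exp {v : ℝ≥0} (hv : v ≠ 0) (f : ℝ → ℝ) :
    ∫ x, f x ∂gaussianReal 0 v
      = (√(2 * π * v))⁻¹ * ∫ x, f x * exp (-(2 * v : ℝ)⁻¹ * x ^ 2) := by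
  rw [integral_gaussianReal_eq_integral_smul hv, ← integral_const_mul]
  congr 1 with x
  rw [gaussianPDFReal, smul_eq_mul]
  ring_nf

lemma integral_pow_add_two_gaussianReal (v : ℝ≥0) (j : ℕ) :
    ∫ x, x ^ (j + 2) ∂gaussianReal 0 v = (j + 1) * v * ∫ x, x ^ j ∂gaussianReal 0 v := by
  rcases eq_or_ne v 0 with rfl | hv
  · simp
  have hb : 0 < (2 * v : ℝ)⁻¹ := by positivity
  rw [integral_gaussianReal_eq_integral_mul_exp hv, integral_gaussianReal_eq_integral_mul_exp hv,
    integral_pow_add_two_mul_exp_neg_mul_sq hb]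
  field_simp

lemma integrable_pow_gaussianReal (μ : ℝ) (v : ℝ≥0) (j : ℕ) :
    Integrable (fun x => x ^ j) (gaussianReal μ v) := by
  refine ((memLp_id_gaussianReal j).integrable_norm_pow' (p := j)).mono' ?_ ?_
  · fun_prop
  · exact ae_of_all _ fun x => by simp

lemma integral_pow_gaussianReal_nonneg (v : ℝ≥0) (j : ℕ) :
    0 ≤ ∫ x, x ^ j ∂gaussianReal 0 v := by
  induction j using Nat.twoStepInduction with
  | zero => simp
  | one => simp
  | more j ih _ => rw [integral_pow_add_two_gaussianReal]; positivity

lemma integral_pow_gaussianReal_le (v : ℝ≥0) {c : ℝ} (hc : 0 ≤ c) {j : ℕ} (hj : j ≤ c) :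
    ∫ x, x ^ j ∂gaussianReal 0 v ≤ √(c * v) ^ j := by
  induction j using Nat.twoStepInduction with
  | zero => simp
  | one => simp; positivity
  | more j ih _ =>
    push_cast at hj
    calc ∫ x, x ^ (j + 2) ∂gaussianReal 0 v
        = (j + 1) * v * ∫ x, x ^ j ∂gaussianReal 0 v := integral_pow_add_two_gaussianReal v j
      _ ≤ (c * v) * √(c * v) ^ j := by
        gcongr
        · exact integral_pow_gaussianReal_nonneg v j
        · linarith
        · exact ih (by linarith)
      _ = √(c * v) ^ (j + 2) := by
        rw [pow_add, sq_sqrt (by positivity)]; ring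

lemma ProbabilityTheory.IndepFun.integral_mul_add_mul_pow {Ω : Type*} {mΩ : MeasurableSpace Ω}
    {μ : Measure Ω} {X Y : Ω → ℝ} (hXY : IndepFun X Y μ) (a b : ℝ) {k : ℕ}
    (hX : ∀ j ≤ k, Integrable (fun ω => X ω ^ j) μ)
    (hY : ∀ j ≤ k, Integrable (fun ω => Y ω ^ j) μ) :
    ∫ ω, (a * X ω + b * Y ω) ^ k ∂μ
      = ∑ j ∈ range (k + 1), (k.choose j : ℝ) * a ^ j * b ^ (k - j)
          * (∫ ω, X ω ^ j ∂μ) * (∫ ω, Y ω ^ (k - j) ∂μ) := by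
  have hind (j : ℕ) : IndepFun (fun ω => X ω ^ j) (fun ω => Y ω ^ (k - j)) μ :=
    hXY.comp (measurable_id.pow_const j) (measurable_id.pow_const (k - j))
  have hint : ∀ j ∈ range (k + 1), Integrable (fun ω =>
      (k.choose j : ℝ) * a ^ j * b ^ (k - j) * (X ω ^ j * Y ω ^ (k - j))) μ := fun j hj =>
    ((hind j).integrable_mul (hX j (by grind)) (hY (k - j) (Nat.sub_le k j))).const_mul _
  have hexpand : (fun ω => (a * X ω + b * Y ω) ^ k) = fun ω => ∑ j ∈ range (k + 1),
      (k.choose j : ℝ) * a ^ j * b ^ (k - j) * (X ω ^ j * Y ω ^ (k - j)) := by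
    funext ω
    rw [add_pow]
    exact sum_congr rfl fun j _ => by ring
  rw [hexpand, integral_finsetSum _ hint]
  refine sum_congr rfl fun j hj => ?_
  rw [integral_const_mul, (hind j).integral_fun_mul_eq_mul_integral
    (hX j (by grind)).aestronglyMeasurable (hY (k - j) (Nat.sub_le k j)).aestronglyMeasurable]
  ring

lemma integral_pow_gaussianReal_eq_sum {s t : ℝ} (hst : s ^ 2 + t ^ 2 = 1) (k : ℕ) :
    ∫ x, x ^ k ∂gaussianReal 0 1
      = ∑ j ∈ range (k + 1), (k.choose j : ℝ) * s ^ j * t ^ (k - j)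
          * (∫ x, x ^ j ∂gaussianReal 0 1) * (∫ x, x ^ (k - j) ∂gaussianReal 0 1) := by
  let P := (gaussianReal 0 1).prod (gaussianReal 0 1)
  have hfst : HasLaw (fun p : ℝ × ℝ => p.1) (gaussianReal 0 1) P := ⟨by fun_prop, by simp [P]⟩
  have hsnd : HasLaw (fun p : ℝ × ℝ => p.2) (gaussianReal 0 1) P := ⟨by fun_prop, by simp [P]⟩
  have hind : IndepFun (fun p : ℝ × ℝ => p.1) (fun p : ℝ × ℝ => p.2) P :=
    indepFun_prod measurable_id measurable_id
  have hsum : HasLaw (fun p : ℝ × ℝ => s * p.1 + t * p.2) (gaussianReal 0 1) P := by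
    have := (hind.comp (measurable_const_mul s) (measurable_const_mul t)).hasLaw_fun_add
      (gaussianReal_const_mul hfst s) (gaussianReal_const_mul hsnd t)
    rw [gaussianReal_conv_gaussianReal] at this
    convert this using 2
    · simp
    · exact NNReal.eq (by simp [hst])
  have hpow {X : ℝ × ℝ → ℝ} (hX : HasLaw X (gaussianReal 0 1) P) (j : ℕ) :
      ∫ p, X p ^ j ∂P = ∫ x, x ^ j ∂gaussianReal 0 1 :=
    hX.integral_comp (f := fun x => x ^ j) (by fun_prop)
  rw [← hpow hsum, hind.integral_mul_add_mul_pow s t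
    (fun j _ => (integrable_pow_gaussianReal 0 1 j).comp_fst _)
    (fun j _ => (integrable_pow_gaussianReal 0 1 j).comp_snd _)]
  simp_rw [hpow hfst, hpow hsnd]

lemma integral_mul_add_mul_pow_sub_integral_gaussianReal {Ω : Type*} {mΩ : MeasurableSpace Ω}
    {μ : Measure Ω} {Y Z : Ω → ℝ} (hYZ : IndepFun Y Z μ) (hZ : HasLaw Z (gaussianReal 0 1) μ)
    {s t : ℝ} (hst : s ^ 2 + t ^ 2 = 1) {k : ℕ} (hY : ∀ j ≤ k, Integrable (fun ω => Y ω ^ j) μ) :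
    ∫ ω, (s * Y ω + t * Z ω) ^ k ∂μ - ∫ x, x ^ k ∂gaussianReal 0 1
      = ∑ j ∈ range (k + 1), (k.choose j : ℝ) * s ^ j * t ^ (k - j)
          * (∫ ω, Y ω ^ j ∂μ - ∫ x, x ^ j ∂gaussianReal 0 1)
          * ∫ x, x ^ (k - j) ∂gaussianReal 0 1 := by
  have hZpow (j : ℕ) : ∫ ω, Z ω ^ j ∂μ = ∫ x, x ^ j ∂gaussianReal 0 1 :=
    hZ.integral_comp (f := fun x => x ^ j) (by fun_prop)
  have hZint (j : ℕ) (_ : j ≤ k) : Integrable (fun ω => Z ω ^ j) μ :=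
    (hZ.map_eq ▸ integrable_pow_gaussianReal 0 1 j).comp_aemeasurable hZ.aemeasurable
  rw [hYZ.integral_mul_add_mul_pow s t hY hZint, integral_pow_gaussianReal_eq_sum hst k,
    ← sum_sub_distrib]
  simp_rw [hZpow]
  exact sum_congr rfl fun j _ => by ring

lemma integral_mul_add_mul_pow_sub_integral_gaussianReal_eq_sum_Ico {Ω : Type*}
    {mΩ : MeasurableSpace Ω} {μ : Measure Ω} {Y Z : Ω → ℝ} (hYZ : IndepFun Y Z μ)
    (hZ : HasLaw Z (gaussianReal 0 1) μ) {s t : ℝ} (hst : s ^ 2 + t ^ 2 = 1) {r k : ℕ}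
    (hrk : r ≤ k) (hY : ∀ j ≤ k, Integrable (fun ω => Y ω ^ j) μ)
    (hmatch : ∀ j < r, ∫ ω, Y ω ^ j ∂μ = ∫ x, x ^ j ∂gaussianReal 0 1) :
    ∫ ω, (s * Y ω + t * Z ω) ^ k ∂μ - ∫ x, x ^ k ∂gaussianReal 0 1
      = s ^ k * (∫ ω, Y ω ^ k ∂μ - ∫ x, x ^ k ∂gaussianReal 0 1)
        + ∑ j ∈ Ico r k, (k.choose j : ℝ) * s ^ j * t ^ (k - j)
          * (∫ ω, Y ω ^ j ∂μ - ∫ x, x ^ j ∂gaussianReal 0 1)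
          * ∫ x, x ^ (k - j) ∂gaussianReal 0 1 := by
  rw [integral_mul_add_mul_pow_sub_integral_gaussianReal hYZ hZ hst hY,
    ← sum_range_add_sum_Ico _ (hrk.trans k.le_succ), sum_Ico_succ_top hrk,
    sum_eq_zero fun j hj => by rw [hmatch j (mem_range.1 hj), sub_self]; ring]
  simp [add_comm]

lemma integral_pow_eq_integral_pow_gaussianReal_of_lt_three {Ω : Type*} {mΩ : MeasurableSpace Ω}
    {μ : Measure Ω} [IsProbabilityMeasure μ] {Y : Ω → ℝ} (hmean : ∫ ω, Y ω ∂μ = 0)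
    (hvar : ∫ ω, Y ω ^ 2 ∂μ = 1) :
    ∀ j < 3, ∫ ω, Y ω ^ j ∂μ = ∫ x, x ^ j ∂gaussianReal 0 1 := by
  intro j hj
  interval_cases j
  · simp
  · simpa using hmean
  · simpa [integral_pow_add_two_gaussianReal 1 0] using hvar

lemma abs_sum_Ico_mul_integral_gaussianReal_le {s t D : ℝ} (hs₀ : 0 ≤ s) (hs₁ : s ≤ 1)
    (ht₀ : 0 ≤ t) (ht₁ : t ≤ 1) (hD : 0 ≤ D) {r k : ℕ} (hrk : r ≤ k) {d : ℕ → ℝ}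
    (hd : ∀ j ∈ Ico r k, |d j| ≤ D) :
    |∑ j ∈ Ico r k, (k.choose j : ℝ) * s ^ j * t ^ (k - j) * d j
        * ∫ x, x ^ (k - j) ∂gaussianReal 0 1|
      ≤ D * t * s ^ r * (1 + √((k : ℝ) - r)) ^ k := by
  set c : ℝ := (k : ℝ) - r
  have hc : 0 ≤ c := by simp [c, hrk]
  calc _ ≤ ∑ j ∈ Ico r k, |(k.choose j : ℝ) * s ^ j * t ^ (k - j) * d j
        * ∫ x, x ^ (k - j) ∂gaussianReal 0 1| := abs_sum_le_sum_abs _ _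
    _ ≤ ∑ j ∈ Ico r k, D * t * s ^ r * ((k.choose j : ℝ) * √c ^ (k - j)) := by
      refine sum_le_sum fun j hj => ?_
      obtain ⟨hrj, hjk⟩ := mem_Ico.1 hj
      have hmoment : ∫ x, x ^ (k - j) ∂gaussianReal 0 1 ≤ √c ^ (k - j) := by
        simpa using integral_pow_gaussianReal_le 1 hc (j := k - j)
          (by rw [Nat.cast_sub hjk.le]; linarith [(Nat.cast_le (α := ℝ)).2 hrj])
      rw [abs_mul, abs_mul, abs_mul, abs_mul, abs_of_nonneg (Nat.cast_nonneg _),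
        abs_of_nonneg (pow_nonneg hs₀ j), abs_of_nonneg (pow_nonneg ht₀ _),
        abs_of_nonneg (integral_pow_gaussianReal_nonneg 1 _)]
      have hsj : s ^ j ≤ s ^ r := pow_le_pow_of_le_one hs₀ hs₁ hrj
      have htj : t ^ (k - j) ≤ t ^ 1 := pow_le_pow_of_le_one ht₀ ht₁ (by omega)
      calc _ ≤ (k.choose j : ℝ) * s ^ r * t ^ 1 * D * √c ^ (k - j) := by
            gcongr
            · exact integral_pow_gaussianReal_nonneg 1 _
            · exact hd j hj
        _ = _ := by ring
    _ ≤ ∑ j ∈ range (k + 1), D * t * s ^ r * ((k.choose j : ℝ) * √c ^ (k - j)) :=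
      sum_le_sum_of_subset_of_nonneg (fun j hj => by grind) fun j _ _ => by positivity
    _ = D * t * s ^ r * (1 + √c) ^ k := by
      rw [← mul_sum, add_pow]
      exact congrArg _ (sum_congr rfl fun j _ => by ring)

theorem moment_perturbation_general
    {Ω : Type*} [MeasureSpace Ω] [IsProbabilityMeasure (ℙ : Measure Ω)]
    (Y Z : Ω → ℝ) (t D : ℝ) (ht : t ∈ Set.Icc (0 : ℝ) 1) (hD : 0 < D) (k : ℕ) (hk : 3 ≤ k)
    (hZ : Measure.map Z ℙ = gaussianReal 0 1)
    (hindep : IndepFun Y Z ℙ)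
    (hmean : ∫ ω, Y ω = 0) (hvar : ∫ ω, Y ω ^ 2 = 1)
    (hYint : ∀ j ≤ k, Integrable (fun ω => Y ω ^ j))
    (hgap : |(∫ ω, Y ω ^ k) - (∫ x, x ^ k ∂(gaussianReal 0 1))| ≥ D)
    (hmin : ∀ j < k, |(∫ ω, Y ω ^ j) - (∫ x, x ^ j ∂(gaussianReal 0 1))| < D) :
    |(∫ ω, (Real.sqrt (1 - t ^ 2) * Y ω + t * Z ω) ^ k) - (∫ x, x ^ k ∂(gaussianReal 0 1))|
      ≥ D * ((1 - t ^ 2) ^ ((k : ℝ) / 2)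
              - t * (1 - t ^ 2) ^ ((3 : ℝ) / 2) * (1 + Real.sqrt ((k : ℝ) - 3)) ^ k)
    ∧ (k = 3 →
        |(∫ ω, (Real.sqrt (1 - t ^ 2) * Y ω + t * Z ω) ^ 3) - (∫ x, x ^ 3 ∂(gaussianReal 0 1))|
          ≥ D * (1 - t ^ 2) ^ ((3 : ℝ) / 2)) := by
  obtain ⟨ht₀, ht₁⟩ := ht
  have h1t : 0 ≤ 1 - t ^ 2 := by nlinarith
  have hs_pow (n : ℕ) : (1 - t ^ 2) ^ ((n : ℝ) / 2) = √(1 - t ^ 2) ^ n := by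
    rw [rpow_div_two_eq_sqrt _ h1t, rpow_natCast]
  set s := √(1 - t ^ 2)
  have hst : s ^ 2 + t ^ 2 = 1 := by rw [sq_sqrt h1t]; ring
  have hs₀ : 0 ≤ s := sqrt_nonneg _
  have hs₁ : s ≤ 1 := sqrt_le_one.2 (sub_le_self _ (sq_nonneg t))
  have hs_cube : (1 - t ^ 2) ^ ((3 : ℝ) / 2) = s ^ 3 := by exact_mod_cast hs_pow 3
  have hsplit := integral_mul_add_mul_pow_sub_integral_gaussianReal_eq_sum_Ico hindep
    ⟨aemeasurable_of_map_neZero (by rw [hZ]; infer_instance), hZ⟩ hst hk hYint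
    (integral_pow_eq_integral_pow_gaussianReal_of_lt_three hmean hvar)
  have htail := abs_sum_Ico_mul_integral_gaussianReal_le hs₀ hs₁ ht₀ ht₁ hD.le hk
    fun j hj => (hmin j (mem_Ico.1 hj).2).le
  have hlead : D * s ^ k ≤ |s ^ k * ((∫ ω, Y ω ^ k) - ∫ x, x ^ k ∂gaussianReal 0 1)| := by
    rw [abs_mul, abs_of_nonneg (by positivity), mul_comm]
    exact mul_le_mul_of_nonneg_left hgap (by positivity)
  refine ⟨?_, ?_⟩
  · rw [hs_pow, hs_cube, hsplit]
    push_cast at htail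
    calc D * (s ^ k - t * s ^ 3 * (1 + √((k : ℝ) - 3)) ^ k)
        = D * s ^ k - D * t * s ^ 3 * (1 + √((k : ℝ) - 3)) ^ k := by ring
      _ ≤ _ := sub_le_sub hlead htail
      _ ≤ _ := abs_sub_abs_le_abs_add _ _
  · rintro rfl
    rwa [hs_cube, hsplit, Ico_self, sum_empty, add_zero]

/-- Moment perturbation bound: if `Y` has mean 0 and variance 1, `Z` is an independent
standard Gaussian, `W_t = √(1-t²)Y + tZ`, and `k ≥ 3` is the smallest index with
`|M_k(Y) - M_k(Z)| ≥ D`, then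
`|M_k(W_t) - M_k(Z)| ≥ D((1-t²)^{k/2} - t(1-t²)^{3/2}(1+√(k-3))^k)`;
in particular for `k = 3`, `|M_3(W_t) - M_3(Z)| ≥ D(1-t²)^{3/2}`. -/
theorem moment_perturbation
    {Ω : Type*} [MeasureSpace Ω] [IsProbabilityMeasure (ℙ : Measure Ω)]
    (Y Z : Ω → ℝ) (t D : ℝ) (ht : t ∈ Set.Icc (0 : ℝ) 1) (hD : 0 < D) (k : ℕ) (hk : 3 ≤ k)
    (hZ : Measure.map Z ℙ = gaussianReal 0 1)
    (hindep : IndepFun Y Z ℙ)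
    (hmean : ∫ ω, Y ω = 0) (hvar : ∫ ω, Y ω ^ 2 = 1)
    (hYint : ∀ j ≤ k, Integrable (fun ω => Y ω ^ j))
    (hZint : ∀ j ≤ k, Integrable (fun ω => Z ω ^ j))
    (hWint : Integrable (fun ω => (Real.sqrt (1 - t ^ 2) * Y ω + t * Z ω) ^ k))
    (hgap : |(∫ ω, Y ω ^ k) - (∫ x, x ^ k ∂(gaussianReal 0 1))| ≥ D)
    (hmin : ∀ j < k, |(∫ ω, Y ω ^ j) - (∫ x, x ^ j ∂(gaussianReal 0 1))| < D) :
    |(∫ ω, (Real.sqrt (1 - t ^ 2) * Y ω + t * Z ω) ^ k) - (∫ x, x ^ k ∂(gaussianReal 0 1))|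
      ≥ D * ((1 - t ^ 2) ^ ((k : ℝ) / 2)
              - t * (1 - t ^ 2) ^ ((3 : ℝ) / 2) * (1 + Real.sqrt ((k : ℝ) - 3)) ^ k)
    ∧ (k = 3 →
        |(∫ ω, (Real.sqrt (1 - t ^ 2) * Y ω + t * Z ω) ^ 3) - (∫ x, x ^ 3 ∂(gaussianReal 0 1))|
          ≥ D * (1 - t ^ 2) ^ ((3 : ℝ) / 2)) :=
  moment_perturbation_general Y Z t D ht hD k hk hZ hindep hmean hvar hYint hgap hmin
end

section
/- Let X be a real random variable with mean zero and variance one, Z an independent standard Gaussian, and Y_t = √(1-t²)X + tZ for t < 1. Then Y_t has a density ρ satisfying the pointwise lower bound ρ(x) ≥ C(t) e^{-x²/t²}, where C(t) = (1 - 1/(2(1-t²))) e^{-2/t²} / (√(2π) t). -/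
open MeasureTheory ProbabilityTheory Real
open scoped NNReal ENNReal

/-! The law of `Y_t` is the convolution of the law `μ` of `√(1-t²) X` with the centred Gaussian
of variance `t²`, so it has density `ρ(x) = ∫ φ_{t²}(x - y) dμ(y)`. For `y² ≤ 2` we have
`(x - y)² ≤ 2x² + 4`, hence `φ_{t²}(x - y) ≥ e^{-(x²+2)/t²} / (√(2π) t)`, and by Chebyshev
`μ {y² ≤ 2} ≥ 1 - (1 - t²)/2 ≥ 1 - 1/(2(1-t²))`. -/

lemma gaussianPDFReal_le (m : ℝ) (v : ℝ≥0) (x : ℝ) :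
    gaussianPDFReal m v x ≤ (√(2 * π * v))⁻¹ := by
  rw [gaussianPDFReal]
  refine mul_le_of_le_one_right (by positivity) (exp_le_one_iff.mpr ?_)
  exact div_nonpos_of_nonpos_of_nonneg (neg_nonpos.mpr (sq_nonneg _)) (by positivity)

lemma inv_sqrt_mul_exp_le_gaussianPDFReal {m r : ℝ} (hm : m ^ 2 ≤ r) (v : ℝ≥0) (x : ℝ) :
    (√(2 * π * v))⁻¹ * exp (-(x ^ 2 + r) / v) ≤ gaussianPDFReal m v x := by
  rw [gaussianPDFReal]
  refine mul_le_mul_of_nonneg_left (exp_le_exp.mpr ?_) (by positivity)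
  rw [← mul_div_mul_left _ (v : ℝ) (two_ne_zero' ℝ)]
  exact div_le_div_of_nonneg_right (by nlinarith [sq_nonneg (x + m)]) (by positivity)

lemma integrable_gaussianPDFReal_mean {μ : Measure ℝ} [IsFiniteMeasure μ] (v : ℝ≥0) (x : ℝ) :
    Integrable (fun m ↦ gaussianPDFReal m v x) μ := by
  refine .of_bound (by fun_prop) (√(2 * π * v))⁻¹ (ae_of_all _ fun m ↦ ?_)
  rw [norm_of_nonneg (gaussianPDFReal_nonneg _ _ _)]
  exact gaussianPDFReal_le m v x

lemma conv_gaussianReal_eq_withDensity_lintegral (μ : Measure ℝ) [SFinite μ] {v : ℝ≥0}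
    (hv : v ≠ 0) :
    μ ∗ gaussianReal 0 v = volume.withDensity (fun x ↦ ∫⁻ m, gaussianPDF m v x ∂μ) := by
  ext s hs
  have hfiber (m : ℝ) : gaussianReal 0 v (Prod.mk m ⁻¹' ((fun p : ℝ × ℝ ↦ p.1 + p.2) ⁻¹' s))
      = ∫⁻ x in s, gaussianPDF m v x := by
    rw [← gaussianReal_apply _ hv, ← zero_add m, ← gaussianReal_map_const_add,
      Measure.map_apply (measurable_const_add m) hs, zero_add]
    rfl
  rw [Measure.conv, Measure.map_apply measurable_add hs, Measure.prod_apply (measurable_add hs),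
    withDensity_apply _ hs]
  simp_rw [hfiber]
  exact lintegral_lintegral_swap
    (measurable_uncurry_gaussianPDF.comp (f := fun p : ℝ × ℝ ↦ (p.1, v, p.2))
      (by fun_prop)).aemeasurable

lemma conv_gaussianReal_eq_withDensity (μ : Measure ℝ) [IsFiniteMeasure μ] {v : ℝ≥0}
    (hv : v ≠ 0) :
    μ ∗ gaussianReal 0 v
      = volume.withDensity (fun x ↦ ENNReal.ofReal (∫ m, gaussianPDFReal m v x ∂μ)) := by
  rw [conv_gaussianReal_eq_withDensity_lintegral μ hv]
  congr with x
  rw [ofReal_integral_eq_lintegral_ofReal (integrable_gaussianPDFReal_mean v x)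
    (ae_of_all _ fun m ↦ gaussianPDFReal_nonneg _ _ _)]
  rfl

lemma ProbabilityTheory.IndepFun.map_add_const_mul_eq_conv_gaussianReal {Ω : Type*}
    [MeasurableSpace Ω] {P : Measure Ω} [IsProbabilityMeasure P] {X Z : Ω → ℝ} (hX : AEMeasurable X P)
    (hZ : HasLaw Z (gaussianReal 0 1) P) (hXZ : IndepFun X Z P) (t : ℝ) :
    P.map (fun ω ↦ X ω + t * Z ω) = P.map X ∗ gaussianReal 0 (.mk (t ^ 2) (sq_nonneg t)) := by
  have htZ := gaussianReal_const_mul hZ t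
  rw [mul_zero, mul_one] at htZ
  rw [← htZ.map_eq]
  exact (hXZ.comp measurable_id (measurable_const_mul t)).map_add_eq_map_conv_map₀ hX
    htZ.aemeasurable

lemma integrable_sq_map_const_mul {Ω : Type*} [MeasurableSpace Ω] {P : Measure Ω} {X : Ω → ℝ}
    (hX : AEMeasurable X P) (hX2 : Integrable (fun ω ↦ X ω ^ 2) P) (c : ℝ) :
    Integrable (fun y : ℝ ↦ y ^ 2) (P.map (fun ω ↦ c * X ω)) := by
  rw [integrable_map_measure (continuous_pow 2).aestronglyMeasurable (hX.const_mul c)]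
  simpa [Function.comp_def, mul_pow] using hX2.const_mul (c ^ 2)

lemma integral_sq_map_const_mul {Ω : Type*} [MeasurableSpace Ω] {P : Measure Ω} {X : Ω → ℝ}
    (hX : AEMeasurable X P) (c : ℝ) :
    ∫ y, y ^ 2 ∂(P.map (fun ω ↦ c * X ω)) = c ^ 2 * ∫ ω, X ω ^ 2 ∂P := by
  simp_rw [integral_map (hX.const_mul c) (continuous_pow 2).aestronglyMeasurable, mul_pow,
    integral_const_mul]

lemma mul_one_sub_integral_div_le_integral {α : Type*} [MeasurableSpace α] {μ : Measure α}
    [IsProbabilityMeasure μ] {f g : α → ℝ} {c r : ℝ} (hc : 0 ≤ c) (hr : 0 < r)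
    (hf : Integrable f μ) (hg : Integrable g μ) (hf0 : ∀ a, 0 ≤ f a) (hg0 : ∀ a, 0 ≤ g a)
    (hfc : ∀ a, g a ≤ r → c ≤ f a) :
    c * (1 - (∫ a, g a ∂μ) / r) ≤ ∫ a, f a ∂μ := by
  -- Markov's inequality in pointwise form: `c (1 - g/r)` is at most `c` everywhere and is
  -- nonpositive off `{g ≤ r}`.
  have hpt (a : α) : c * (1 - g a / r) ≤ f a := by
    rcases le_or_gt (g a) r with hga | hga
    · have : g a / r ≥ 0 := div_nonneg (hg0 a) hr.le
      nlinarith [hfc a hga]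
    · have : 1 < g a / r := (one_lt_div hr).mpr hga
      nlinarith [hf0 a]
  calc c * (1 - (∫ a, g a ∂μ) / r) = ∫ a, c * (1 - g a / r) ∂μ := by
        rw [integral_const_mul, integral_sub (integrable_const 1) (hg.div_const r),
          integral_div, integral_const, probReal_univ, one_smul]
    _ ≤ ∫ a, f a ∂μ :=
        integral_mono (((integrable_const 1).sub (hg.div_const r)).const_mul c) hf hpt

lemma lower_bound_le_inv_sqrt_mul_exp_mul {t : ℝ} (ht : 0 < t) (ht1 : t < 1) (x : ℝ) :
    ((1 - 1 / (2 * (1 - t ^ 2))) * exp (-2 / t ^ 2) / (√(2 * π) * t)) * exp (-x ^ 2 / t ^ 2)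
      ≤ (√(2 * π * t ^ 2))⁻¹ * exp (-(x ^ 2 + 2) / t ^ 2) * (1 - (1 - t ^ 2) / 2) := by
  have ht2 : 0 < 1 - t ^ 2 := by nlinarith
  have hconst : 1 - 1 / (2 * (1 - t ^ 2)) ≤ 1 - (1 - t ^ 2) / 2 := by
    rw [sub_le_sub_iff_left, div_le_div_iff₀ two_pos (by positivity)]
    nlinarith
  have hexp : exp (-(x ^ 2 + 2) / t ^ 2) = exp (-2 / t ^ 2) * exp (-x ^ 2 / t ^ 2) := by
    rw [← exp_add]
    ring_nf
  rw [sqrt_mul (by positivity) (t ^ 2), sqrt_sq ht.le, hexp]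
  calc _ = (1 - 1 / (2 * (1 - t ^ 2))) * (exp (-2 / t ^ 2) * exp (-x ^ 2 / t ^ 2)
        / (√(2 * π) * t)) := by ring
    _ ≤ (1 - (1 - t ^ 2) / 2) * (exp (-2 / t ^ 2) * exp (-x ^ 2 / t ^ 2) / (√(2 * π) * t)) := by
        gcongr
    _ = _ := by ring

theorem density_lower_bound_general
    {Ω : Type*} [MeasureSpace Ω] [IsProbabilityMeasure (ℙ : Measure Ω)]
    (X Z : Ω → ℝ) (t : ℝ) (ht : 0 < t) (ht1 : t < 1)
    (hXmeas : Measurable X)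
    (hZ : Measure.map Z ℙ = gaussianReal 0 1)
    (hindep : IndepFun X Z ℙ)
    (hvar : ∫ ω, X ω ^ 2 = 1) :
    ∃ ρ : ℝ → ℝ,
      Measure.map (fun ω => Real.sqrt (1 - t ^ 2) * X ω + t * Z ω) ℙ
        = volume.withDensity (fun x => ENNReal.ofReal (ρ x))
      ∧ ∀ x : ℝ,
          ρ x ≥ ((1 - 1 / (2 * (1 - t ^ 2))) * Real.exp (-2 / t ^ 2)
                  / (Real.sqrt (2 * Real.pi) * t)) * Real.exp (-x ^ 2 / t ^ 2) := by
  set a := √(1 - t ^ 2)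
  set V : ℝ≥0 := .mk (t ^ 2) (sq_nonneg t)
  set μ := (ℙ : Measure Ω).map (fun ω ↦ a * X ω)
  have hV : V ≠ 0 := by simpa [V, ← NNReal.coe_ne_zero] using ht.ne'
  have haX : AEMeasurable (fun ω ↦ a * X ω) ℙ := (hXmeas.const_mul a).aemeasurable
  have : IsProbabilityMeasure μ := Measure.isProbabilityMeasure_map haX
  have hZlaw : HasLaw Z (gaussianReal 0 1) ℙ :=
    ⟨aemeasurable_of_map_neZero (by rw [hZ]; infer_instance), hZ⟩
  have hlaw : (ℙ : Measure Ω).map (fun ω ↦ a * X ω + t * Z ω) = μ ∗ gaussianReal 0 V :=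
    (hindep.comp (measurable_const_mul a) measurable_id).map_add_const_mul_eq_conv_gaussianReal
      haX hZlaw t
  have hX2 : Integrable (fun ω ↦ X ω ^ 2) ℙ := by
    by_contra h
    simp [integral_undef h] at hvar
  have hμvar : ∫ y, y ^ 2 ∂μ = 1 - t ^ 2 := by
    rw [integral_sq_map_const_mul hXmeas.aemeasurable, hvar, mul_one, sq_sqrt (by nlinarith)]
  refine ⟨fun x ↦ ∫ y, gaussianPDFReal y V x ∂μ,
    hlaw.trans (conv_gaussianReal_eq_withDensity μ hV), fun x ↦ ?_⟩
  calc _ ≤ (√(2 * π * V))⁻¹ * exp (-(x ^ 2 + 2) / V) * (1 - (∫ y, y ^ 2 ∂μ) / 2) := by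
        rw [hμvar]; exact lower_bound_le_inv_sqrt_mul_exp_mul ht ht1 x
    _ ≤ ∫ y, gaussianPDFReal y V x ∂μ :=
        mul_one_sub_integral_div_le_integral (by positivity) two_pos
          (integrable_gaussianPDFReal_mean V x)
          (integrable_sq_map_const_mul hXmeas.aemeasurable hX2 a)
          (fun _ ↦ gaussianPDFReal_nonneg _ _ _) (fun _ ↦ sq_nonneg _)
          (fun _ hy ↦ inv_sqrt_mul_exp_le_gaussianPDFReal hy V x)

/-- Density lower bound after Gaussian smoothing: if `X` has mean 0 and variance 1, `Z` is
an independent standard Gaussian and `Y_t = √(1-t²)X + tZ` with `0 < t < 1`, then `Y_t`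
has a density `ρ` with `ρ(x) ≥ C(t) e^{-x²/t²}`, where
`C(t) = (1 - 1/(2(1-t²))) e^{-2/t²} / (√(2π) t)`. -/
theorem density_lower_bound
    {Ω : Type*} [MeasureSpace Ω] [IsProbabilityMeasure (ℙ : Measure Ω)]
    (X Z : Ω → ℝ) (t : ℝ) (ht : 0 < t) (ht1 : t < 1)
    (hXmeas : Measurable X)
    (hZ : Measure.map Z ℙ = gaussianReal 0 1)
    (hindep : IndepFun X Z ℙ)
    (hmean : ∫ ω, X ω = 0) (hvar : ∫ ω, X ω ^ 2 = 1) :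
    ∃ ρ : ℝ → ℝ,
      Measure.map (fun ω => Real.sqrt (1 - t ^ 2) * X ω + t * Z ω) ℙ
        = volume.withDensity (fun x => ENNReal.ofReal (ρ x))
      ∧ ∀ x : ℝ,
          ρ x ≥ ((1 - 1 / (2 * (1 - t ^ 2))) * Real.exp (-2 / t ^ 2)
                  / (Real.sqrt (2 * Real.pi) * t)) * Real.exp (-x ^ 2 / t ^ 2) :=
  density_lower_bound_general X Z t ht ht1 hXmeas hZ hindep hvar
end

section
/- Let 0 < ε < 1/(25n²), let λ₁,…,λ_k ∈ ℝⁿ be orthonormal and γ₁,…,γ_k ∈ ℝⁿ be unit vectors with ⟨λᵢ, γᵢ⟩ ≥ 1 - ε for all i. Then the spans Λ_k of the λᵢ and Γ_k of the γᵢ have the same dimension k, and d(Λ_k, Γ_k) ≤ 6k²·ε^{1/4}. -/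
/-! For subspaces `V`, `W` with projections `P`, `Q` and an orthonormal basis `u` of `V`,
`‖P - Q‖_F² = tr P + tr Q - 2 tr (P Q) = dim V + dim W - 2 ∑ᵢ ‖Q uᵢ‖²`. Take `V = Λ`, `uᵢ = λᵢ`
and `W = Γ`: each defect `1 - ‖Q λᵢ‖² = dist (λᵢ, Γ)²` is at most `‖λᵢ - γᵢ‖² ≤ 2ε`, so once
`dim Γ = k` the squared distance is at most `4kε`. The `γᵢ` are independent because
`∑ ‖λᵢ - γᵢ‖² ≤ 2kε < 1`: a relation `∑ gᵢ γᵢ = 0` gives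
`∑ gᵢ² = ‖∑ gᵢ (λᵢ - γᵢ)‖² ≤ (∑ gᵢ²) ∑ ‖λᵢ - γᵢ‖²`. Finally `2 √(kε) ≤ 6 k² ε^{1/4}`. -/

open Module

variable {n : ℕ}

/-- The matrix (in the standard basis) of the orthogonal projection onto a subspace of `ℝⁿ`. -/
noncomputable def projMatrix (V : Submodule ℝ (EuclideanSpace ℝ (Fin n))) :
    Matrix (Fin n) (Fin n) ℝ :=
  LinearMap.toMatrix (EuclideanSpace.basisFun (Fin n) ℝ).toBasis
    (EuclideanSpace.basisFun (Fin n) ℝ).toBasis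
    (V.subtype ∘ₗ (V.orthogonalProjection).toLinearMap)

/-- Frobenius norm of a square real matrix. -/
noncomputable def frobNorm (A : Matrix (Fin n) (Fin n) ℝ) : ℝ :=
  Real.sqrt (∑ i, ∑ j, (A i j) ^ 2)

/-- Subspace distance: Frobenius norm of the difference of orthogonal projections. -/
noncomputable def subspaceDist (V W : Submodule ℝ (EuclideanSpace ℝ (Fin n))) : ℝ :=
  frobNorm (projMatrix V - projMatrix W)

section

variable {E : Type*} [NormedAddCommGroup E] [InnerProductSpace ℝ E] {ι κ : Type*}
  [Fintype ι] [Fintype κ]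

namespace Submodule

variable (K : Submodule ℝ E) [K.HasOrthogonalProjection]

theorem real_inner_starProjection_self (x : E) :
    inner ℝ x (K.starProjection x) = ‖K.starProjection x‖ ^ 2 := by
  simpa [real_inner_comm] using K.re_inner_starProjection_eq_normSq x

theorem norm_sub_starProjection_sq (x : E) :
    ‖x - K.starProjection x‖ ^ 2 = ‖x‖ ^ 2 - ‖K.starProjection x‖ ^ 2 := by
  rw [K.norm_sq_eq_add_norm_sq_starProjection x, K.starProjection_orthogonal']
  simp

theorem norm_sub_starProjection_le {y : E} (hy : y ∈ K) (x : E) :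
    ‖x - K.starProjection x‖ ≤ ‖x - y‖ := by
  rw [starProjection_minimal]
  exact ciInf_le ⟨0, Set.forall_mem_range.2 fun _ => norm_nonneg _⟩ (⟨y, hy⟩ : K)

theorem inner_starProjection_eq_sum (V W : Submodule ℝ E) [V.HasOrthogonalProjection]
    [W.HasOrthogonalProjection] (u : OrthonormalBasis κ ℝ V) (x : E) :
    inner ℝ (V.starProjection x) (W.starProjection x)
      = ∑ i, inner ℝ (u i : E) x * inner ℝ x (W.starProjection (u i)) := by
  rw [starProjection_apply, u.orthogonalProjectionOnto_apply_eq_sum]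
  push_cast
  rw [sum_inner]
  refine Finset.sum_congr rfl fun i _ => ?_
  rw [real_inner_smul_left, ← inner_starProjection_left_eq_right,
    real_inner_comm x (W.starProjection _)]

end Submodule

namespace OrthonormalBasis

variable (b : OrthonormalBasis ι ℝ E)

theorem sum_inner_starProjection (V W : Submodule ℝ E) [V.HasOrthogonalProjection]
    [W.HasOrthogonalProjection] (u : OrthonormalBasis κ ℝ V) :
    ∑ j, inner ℝ (V.starProjection (b j)) (W.starProjection (b j))
      = ∑ i, ‖W.starProjection (u i)‖ ^ 2 := by
  simp_rw [Submodule.inner_starProjection_eq_sum V W u]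
  rw [Finset.sum_comm]
  simp_rw [b.sum_inner_mul_inner, Submodule.real_inner_starProjection_self]

theorem sum_norm_starProjection_sq (V : Submodule ℝ E) [FiniteDimensional ℝ V] :
    ∑ j, ‖V.starProjection (b j)‖ ^ 2 = finrank ℝ V := by
  let u := stdOrthonormalBasis ℝ V
  simp_rw [← real_inner_self_eq_norm_sq, b.sum_inner_starProjection V V u,
    V.starProjection_mem_subspace_eq_self, Submodule.norm_coe, u.orthonormal.1]
  simp

theorem sum_norm_sub_starProjection_sq (V W : Submodule ℝ E) [FiniteDimensional ℝ V]
    [FiniteDimensional ℝ W] (u : OrthonormalBasis κ ℝ V) :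
    ∑ j, ‖V.starProjection (b j) - W.starProjection (b j)‖ ^ 2
      = finrank ℝ V + finrank ℝ W - 2 * ∑ i, ‖W.starProjection (u i)‖ ^ 2 := by
  simp_rw [norm_sub_sq_real, Finset.sum_add_distrib, Finset.sum_sub_distrib, ← Finset.mul_sum,
    b.sum_inner_starProjection V W u, b.sum_norm_starProjection_sq]
  ring

theorem sum_norm_sub_starProjection_sq_le (V W : Submodule ℝ E) [FiniteDimensional ℝ V]
    [FiniteDimensional ℝ W] (u : OrthonormalBasis κ ℝ V) (hW : finrank ℝ W = Fintype.card κ)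
    (w : κ → E) (hw : ∀ i, w i ∈ W) :
    ∑ j, ‖V.starProjection (b j) - W.starProjection (b j)‖ ^ 2
      ≤ 2 * ∑ i, ‖(u i : E) - w i‖ ^ 2 := by
  have hV : finrank ℝ V = Fintype.card κ := finrank_eq_card_basis u.toBasis
  have hdefect : ∀ i, 1 - ‖W.starProjection (u i)‖ ^ 2 ≤ ‖(u i : E) - w i‖ ^ 2 := fun i =>
    calc 1 - ‖W.starProjection (u i)‖ ^ 2 = ‖(u i : E) - W.starProjection (u i)‖ ^ 2 := by
          rw [W.norm_sub_starProjection_sq, Submodule.norm_coe, u.orthonormal.1 i, one_pow]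
      _ ≤ ‖(u i : E) - w i‖ ^ 2 :=
          pow_le_pow_left₀ (norm_nonneg _) (W.norm_sub_starProjection_le (hw i) _) 2
  have hsum := Finset.sum_le_sum fun i (_ : i ∈ Finset.univ) => hdefect i
  rw [Finset.sum_sub_distrib, Finset.sum_const, Finset.card_univ, nsmul_one] at hsum
  rw [b.sum_norm_sub_starProjection_sq V W u, hV, hW]
  linarith

end OrthonormalBasis

theorem Orthonormal.norm_sum_smul_sq {v : ι → E} (hv : Orthonormal ℝ v) (g : ι → ℝ) :
    ‖∑ i, g i • v i‖ ^ 2 = ∑ i, g i ^ 2 := by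
  rw [← real_inner_self_eq_norm_sq, hv.inner_sum g g Finset.univ]
  simp [sq]

theorem Orthonormal.linearIndependent_of_sum_norm_sub_sq_lt_one {v w : ι → E}
    (hv : Orthonormal ℝ v) (hvw : ∑ i, ‖v i - w i‖ ^ 2 < 1) : LinearIndependent ℝ w := by
  rw [Fintype.linearIndependent_iff]
  intro g hg
  have hgv : ∑ i, g i • v i = ∑ i, g i • (v i - w i) := by
    simp only [smul_sub, Finset.sum_sub_distrib, hg, sub_zero]
  have hle : ∑ i, g i ^ 2 ≤ (∑ i, g i ^ 2) * ∑ i, ‖v i - w i‖ ^ 2 :=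
    calc ∑ i, g i ^ 2 = ‖∑ i, g i • (v i - w i)‖ ^ 2 := by rw [← hgv, hv.norm_sum_smul_sq]
      _ ≤ (∑ i, |g i| * ‖v i - w i‖) ^ 2 := by
          gcongr
          refine (norm_sum_le _ _).trans_eq ?_
          simp [norm_smul]
      _ ≤ (∑ i, g i ^ 2) * ∑ i, ‖v i - w i‖ ^ 2 := by
          simpa only [sq_abs] using
            Finset.sum_mul_sq_le_sq_mul_sq Finset.univ (|g ·|) (fun i => ‖v i - w i‖)
  have hnonneg : 0 ≤ ∑ i, g i ^ 2 := Finset.sum_nonneg fun i _ => sq_nonneg (g i)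
  have hzero : ∑ i, g i ^ 2 = 0 := by nlinarith
  intro i
  exact pow_eq_zero_iff two_ne_zero |>.mp <|
    (Finset.sum_eq_zero_iff_of_nonneg fun j _ => sq_nonneg (g j)).mp hzero i (Finset.mem_univ i)

theorem Orthonormal.exists_orthonormalBasis_span {v : κ → E} (hv : Orthonormal ℝ v) :
    ∃ u : OrthonormalBasis κ ℝ (Submodule.span ℝ (Set.range v)), ∀ i, (u i : E) = v i :=
  ⟨(Basis.span hv.linearIndependent).toOrthonormalBasis
    ((Submodule.subtypeₗᵢ _).orthonormal_comp_iff.mp (by convert hv; ext1; simp)), by simp⟩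

theorem Orthonormal.sum_norm_sub_starProjection_span_sq_le [FiniteDimensional ℝ E]
    (b : OrthonormalBasis ι ℝ E) {v w : κ → E} (hv : Orthonormal ℝ v) {W : Submodule ℝ E}
    (hW : finrank ℝ W = Fintype.card κ) (hw : ∀ i, w i ∈ W) :
    ∑ j, ‖(Submodule.span ℝ (Set.range v)).starProjection (b j) - W.starProjection (b j)‖ ^ 2
      ≤ 2 * ∑ i, ‖v i - w i‖ ^ 2 := by
  obtain ⟨u, hu⟩ := hv.exists_orthonormalBasis_span
  simpa only [hu] using b.sum_norm_sub_starProjection_sq_le _ W u hW w hw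

end

theorem projMatrix_apply (V : Submodule ℝ (EuclideanSpace ℝ (Fin n))) (i j : Fin n) :
    projMatrix V i j = V.starProjection (EuclideanSpace.basisFun (Fin n) ℝ j) i := by
  simp [projMatrix, LinearMap.toMatrix_apply]

theorem subspaceDist_eq_sqrt_sum (V W : Submodule ℝ (EuclideanSpace ℝ (Fin n))) :
    subspaceDist V W = √(∑ j, ‖V.starProjection (EuclideanSpace.basisFun (Fin n) ℝ j)
      - W.starProjection (EuclideanSpace.basisFun (Fin n) ℝ j)‖ ^ 2) := by
  simp_rw [subspaceDist, frobNorm, EuclideanSpace.real_norm_sq_eq, Matrix.sub_apply,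
    projMatrix_apply, PiLp.sub_apply]
  rw [Finset.sum_comm]

theorem sqrt_four_mul_le {ε : ℝ} (k : ℕ) (hε₀ : 0 ≤ ε) (hε₁ : ε ≤ 1) :
    √(4 * k * ε) ≤ 6 * (k : ℝ) ^ 2 * ε ^ ((1 : ℝ) / 4) := by
  set t := ε ^ ((1 : ℝ) / 4) with ht
  have ht₀ : 0 ≤ t := Real.rpow_nonneg hε₀ _
  have ht₁ : t ≤ 1 := Real.rpow_le_one hε₀ hε₁ (by norm_num)
  have hεt : ε = t ^ 4 := by
    rw [ht, ← Real.rpow_natCast, ← Real.rpow_mul hε₀]; norm_num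
  have hk : (k : ℝ) ≤ (k : ℝ) ^ 4 := by
    rcases Nat.eq_zero_or_pos k with rfl | hk
    · simp
    · exact le_self_pow₀ (by exact_mod_cast hk) (by norm_num)
  rw [Real.sqrt_le_iff]
  refine ⟨by positivity, ?_⟩
  have ht42 : t ^ 4 ≤ t ^ 2 := pow_le_pow_of_le_one ht₀ ht₁ (by norm_num)
  calc 4 * k * ε = 4 * k * t ^ 4 := by rw [hεt]
    _ ≤ 4 * k * t ^ 2 := by gcongr
    _ ≤ 36 * k ^ 4 * t ^ 2 := by gcongr; linarith
    _ = (6 * (k : ℝ) ^ 2 * t) ^ 2 := by ring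

/-- If `λ₁,…,λ_k` are orthonormal, `γ₁,…,γ_k` are unit vectors with `⟨λᵢ,γᵢ⟩ ≥ 1-ε` and
`0 < ε < 1/(25n²)`, then the spans `Λ_k`, `Γ_k` have the same dimension `k` and
`d(Λ_k, Γ_k) ≤ 6k²·ε^{1/4}`. -/
theorem span_perturbation (k : ℕ) (ε : ℝ) (hε : 0 < ε) (hε' : ε < 1 / (25 * (n : ℝ) ^ 2))
    (lam gam : Fin k → EuclideanSpace ℝ (Fin n))
    (hlam : Orthonormal ℝ lam)
    (hgam : ∀ i, ‖gam i‖ = 1)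
    (hclose : ∀ i, (inner ℝ (lam i) (gam i) : ℝ) ≥ 1 - ε) :
    finrank ℝ (Submodule.span ℝ (Set.range gam)) = k
    ∧ subspaceDist (Submodule.span ℝ (Set.range lam)) (Submodule.span ℝ (Set.range gam))
        ≤ 6 * (k : ℝ) ^ 2 * ε ^ ((1 : ℝ) / 4) := by
  have hn : 1 ≤ n := Nat.one_le_iff_ne_zero.mpr fun h => by subst h; norm_num at hε'; linarith
  have hn2 : (1 : ℝ) ≤ n ^ 2 := one_le_pow₀ (by exact_mod_cast hn)
  have hsmall : 25 * (n : ℝ) ^ 2 * ε < 1 := by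
    rwa [lt_div_iff₀ (by positivity), mul_comm] at hε'
  have hkn : (k : ℝ) ≤ n ^ 2 := by
    have : k ≤ n := by simpa using hlam.linearIndependent.fintype_card_le_finrank
    exact_mod_cast this.trans (Nat.le_self_pow two_ne_zero n)
  have hpair : ∀ i, ‖lam i - gam i‖ ^ 2 ≤ 2 * ε := fun i => by
    rw [norm_sub_sq_real, hlam.1 i, hgam i]
    linarith [hclose i]
  have htotal : ∑ i, ‖lam i - gam i‖ ^ 2 ≤ 2 * k * ε := by
    simpa [mul_assoc, mul_left_comm] using Finset.sum_le_sum fun i (_ : i ∈ Finset.univ) => hpair i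
  have hrank : finrank ℝ (Submodule.span ℝ (Set.range gam)) = k := by
    rw [finrank_span_eq_card (hlam.linearIndependent_of_sum_norm_sub_sq_lt_one ?_),
      Fintype.card_fin]
    nlinarith [mul_le_mul_of_nonneg_right hkn hε.le]
  refine ⟨hrank, ?_⟩
  have hdist := hlam.sum_norm_sub_starProjection_span_sq_le (EuclideanSpace.basisFun (Fin n) ℝ)
    (by simpa using hrank) fun i => Submodule.subset_span (Set.mem_range_self i)
  rw [subspaceDist_eq_sqrt_sum]
  calc _ ≤ √(4 * k * ε) := Real.sqrt_le_sqrt (by linarith)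
    _ ≤ _ := sqrt_four_mul_le k hε.le (by nlinarith)
end
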